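/- Let u = (u₁,u₂) be a global C^∞ solution of the system. Then for every σ ∈ ℝ, ω ∈ S¹ and t > 0 with t + σ > 0, the profile equations hold exactly: ∂ₜV₁(t;σ,ω) = −(1/(2t))V₁(t;σ,ω)V₂(t;σ,ω)² + K₁(t;σ,ω) and ∂ₜV₂(t;σ,ω) = −(1/(2t))V₁(t;σ,ω)²V₂(t;σ,ω) + K₂(t;σ,ω), where ∂ₜV_j(t;σ,ω) denotes the derivative of t ↦ V_j(t;σ,ω). -/

import Mathlib

open Real MeasureTheory Filter Topology

noncomputable section

/-- Partial derivative in `t`. -/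
def pt (u : ℝ → ℝ → ℝ → ℝ) : ℝ → ℝ → ℝ → ℝ :=
  fun t x1 x2 => deriv (fun s => u s x1 x2) t

/-- Partial derivative in `x₁`. -/
def p1 (u : ℝ → ℝ → ℝ → ℝ) : ℝ → ℝ → ℝ → ℝ :=
  fun t x1 x2 => deriv (fun y => u t y x2) x1

/-- Partial derivative in `x₂`. -/
def p2 (u : ℝ → ℝ → ℝ → ℝ) : ℝ → ℝ → ℝ → ℝ :=
  fun t x1 x2 => deriv (fun y => u t x1 y) x2

/-- The d'Alembertian `□ = ∂ₜ² − ∂₁² − ∂₂²`. -/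
def dAlembert (u : ℝ → ℝ → ℝ → ℝ) : ℝ → ℝ → ℝ → ℝ :=
  fun t x1 x2 => pt (pt u) t x1 x2 - p1 (p1 u) t x1 x2 - p2 (p2 u) t x1 x2

/-- `u : ℝ×ℝ² → ℝ` (curried) is C^∞. -/
def Smooth3 (u : ℝ → ℝ → ℝ → ℝ) : Prop :=
  ContDiff ℝ (⊤ : ℕ∞) (fun p : ℝ × ℝ × ℝ => u p.1 p.2.1 p.2.2)

/-- Compactly supported C^∞ function on ℝ². -/
def SmoothCompact2 (f : ℝ → ℝ → ℝ) : Prop :=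
  ContDiff ℝ (⊤ : ℕ∞) (fun p : ℝ × ℝ => f p.1 p.2) ∧
    HasCompactSupport (fun p : ℝ × ℝ => f p.1 p.2)

/-- Global C^∞ solution of the Cauchy problem
`□u₁ = −(∂ₜu₂)²∂ₜu₁`, `□u₂ = −(∂ₜu₁)²∂ₜu₂` with data `(εf_j, εg_j)`. -/
structure IsSolution (ε : ℝ) (f1 f2 g1 g2 : ℝ → ℝ → ℝ)
    (u1 u2 : ℝ → ℝ → ℝ → ℝ) : Prop where
  smooth1 : Smooth3 u1
  smooth2 : Smooth3 u2
  pde1 : ∀ t x1 x2 : ℝ, 0 < t →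
    dAlembert u1 t x1 x2 = -(pt u2 t x1 x2) ^ 2 * pt u1 t x1 x2
  pde2 : ∀ t x1 x2 : ℝ, 0 < t →
    dAlembert u2 t x1 x2 = -(pt u1 t x1 x2) ^ 2 * pt u2 t x1 x2
  init1 : ∀ x1 x2 : ℝ, u1 0 x1 x2 = ε * f1 x1 x2
  init2 : ∀ x1 x2 : ℝ, u2 0 x1 x2 = ε * f2 x1 x2
  initd1 : ∀ x1 x2 : ℝ, pt u1 0 x1 x2 = ε * g1 x1 x2
  initd2 : ∀ x1 x2 : ℝ, pt u2 0 x1 x2 = ε * g2 x1 x2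

/-- `‖u(t)‖_E²  = ½∫ ((∂ₜu)² + (∂₁u)² + (∂₂u)²) dx`. -/
def energySq (u : ℝ → ℝ → ℝ → ℝ) (t : ℝ) : ℝ :=
  (1 / 2) * ∫ x : ℝ × ℝ,
    ((pt u t x.1 x.2) ^ 2 + (p1 u t x.1 x.2) ^ 2 + (p2 u t x.1 x.2) ^ 2)

/-- The energy norm `‖u(t)‖_E`. -/
def energyNorm (u : ℝ → ℝ → ℝ → ℝ) (t : ℝ) : ℝ :=
  Real.sqrt (energySq u t)

/-- `|x|` in coordinates. -/
def radius (x1 x2 : ℝ) : ℝ := Real.sqrt (x1 ^ 2 + x2 ^ 2)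

/-- The Japanese bracket `⟨z⟩ = (1+z²)^{1/2}`. -/
def jb (z : ℝ) : ℝ := Real.sqrt (1 + z ^ 2)

/-- `U(t,x) = D(|x|^{1/2}u(t,x))` where `D = ½(∂_r − ∂ₜ)`. -/
def Uop (u : ℝ → ℝ → ℝ → ℝ) : ℝ → ℝ → ℝ → ℝ :=
  fun t x1 x2 =>
    (1 / 2) * ((x1 / radius x1 x2) *
        p1 (fun s y1 y2 => radius y1 y2 ^ ((1 : ℝ) / 2) * u s y1 y2) t x1 x2
      + (x2 / radius x1 x2) *
        p2 (fun s y1 y2 => radius y1 y2 ^ ((1 : ℝ) / 2) * u s y1 y2) t x1 x2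
      - pt (fun s y1 y2 => radius y1 y2 ^ ((1 : ℝ) / 2) * u s y1 y2) t x1 x2)

/-- `V(t;σ,ω) = U(t,(t+σ)ω)`. -/
def Vop (u : ℝ → ℝ → ℝ → ℝ) (t σ ω1 ω2 : ℝ) : ℝ :=
  Uop u t ((t + σ) * ω1) ((t + σ) * ω2)

/-- The rotation vector field `Ω = x₁∂₂ − x₂∂₁`. -/
def rot (u : ℝ → ℝ → ℝ → ℝ) : ℝ → ℝ → ℝ → ℝ :=
  fun t x1 x2 => x1 * p2 u t x1 x2 - x2 * p1 u t x1 x2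

/-- `H` for component `a` (the other component being `b`):
`H_a = ½(|x|^{1/2}(∂ₜu_b)²(∂ₜu_a) + t⁻¹U_b²U_a) − (8|x|^{3/2})⁻¹(4Ω²+1)u_a`. -/
def Hfun (ua ub : ℝ → ℝ → ℝ → ℝ) (t x1 x2 : ℝ) : ℝ :=
  (1 / 2) * (radius x1 x2 ^ ((1 : ℝ) / 2) * (pt ub t x1 x2) ^ 2 * pt ua t x1 x2
      + (1 / t) * (Uop ub t x1 x2) ^ 2 * Uop ua t x1 x2)
    - (1 / (8 * radius x1 x2 ^ ((3 : ℝ) / 2))) *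
        (4 * rot (rot ua) t x1 x2 + ua t x1 x2)

/-- `K_a(t;σ,ω) = H_a(t,(t+σ)ω)`. -/
def Kfun (ua ub : ℝ → ℝ → ℝ → ℝ) (t σ ω1 ω2 : ℝ) : ℝ :=
  Hfun ua ub t ((t + σ) * ω1) ((t + σ) * ω2)

/-- `ρ = V₁K₁ − V₂K₂`. -/
def rhoFun (u1 u2 : ℝ → ℝ → ℝ → ℝ) (t σ ω1 ω2 : ℝ) : ℝ :=
  Vop u1 t σ ω1 ω2 * Kfun u1 u2 t σ ω1 ω2 -
    Vop u2 t σ ω1 ω2 * Kfun u2 u1 t σ ω1 ω2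

/-- The Radon transform: line integral of `φ` over `{y : y·ω = s}`. -/
def Rline (φ : ℝ → ℝ → ℝ) (s ω1 ω2 : ℝ) : ℝ :=
  ∫ τ : ℝ, φ (s * ω1 - τ * ω2) (s * ω2 + τ * ω1)

/-- `R₂[φ](σ,ω) = (2√2π)⁻¹ ∫_σ^∞ R[φ](s,ω)(s−σ)^{−1/2} ds`. -/
def R2 (φ : ℝ → ℝ → ℝ) (σ ω1 ω2 : ℝ) : ℝ :=
  (1 / (2 * Real.sqrt 2 * Real.pi)) *
    ∫ s in Set.Ioi σ, Rline φ s ω1 ω2 / Real.sqrt (s - σ)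

/-- The Friedlander radiation field `F₀[φ,ψ] = −∂_σR₂[φ] + R₂[ψ]`. -/
def F0 (φ ψ : ℝ → ℝ → ℝ) (σ ω1 ω2 : ℝ) : ℝ :=
  -deriv (fun σ' => R2 φ σ' ω1 ω2) σ + R2 ψ σ ω1 ω2

/-- `∂_σF₀[φ,ψ]`. -/
def dF0 (φ ψ : ℝ → ℝ → ℝ) (σ ω1 ω2 : ℝ) : ℝ :=
  deriv (fun σ' => F0 φ ψ σ' ω1 ω2) σ

/-- The vector fields `Γ = (S, L₁, L₂, Ω, ∂ₜ, ∂₁, ∂₂)`. -/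
def Gam (i : Fin 7) (u : ℝ → ℝ → ℝ → ℝ) : ℝ → ℝ → ℝ → ℝ :=
  match i with
  | 0 => fun t x1 x2 => t * pt u t x1 x2 + x1 * p1 u t x1 x2 + x2 * p2 u t x1 x2
  | 1 => fun t x1 x2 => t * p1 u t x1 x2 + x1 * pt u t x1 x2
  | 2 => fun t x1 x2 => t * p2 u t x1 x2 + x2 * pt u t x1 x2
  | 3 => rot u
  | 4 => pt u
  | 5 => p1 u
  | 6 => p2 u

/-- `Γ^α = Γ₀^{α₀}⋯Γ₆^{α₆}`. -/
def GamMulti (α : Fin 7 → ℕ) (u : ℝ → ℝ → ℝ → ℝ) : ℝ → ℝ → ℝ → ℝ :=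
  (Gam 0)^[α 0] ((Gam 1)^[α 1] ((Gam 2)^[α 2] ((Gam 3)^[α 3]
    ((Gam 4)^[α 4] ((Gam 5)^[α 5] ((Gam 6)^[α 6] u))))))

/-- Pointwise norm `|φ(t,x)|_s = Σ_{|α|≤s}|Γ^αφ(t,x)|`, for a (finite) family of
components, `|Γ^αφ|` being the Euclidean norm of the vector of components. -/
def ptwiseNorm (s : ℕ) (us : List (ℝ → ℝ → ℝ → ℝ)) (t x1 x2 : ℝ) : ℝ :=
  ∑ α : Fin 7 → Fin (s + 1),
    if (∑ i, (α i : ℕ)) ≤ s then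
      Real.sqrt ((us.map fun u => (GamMulti (fun i => (α i : ℕ)) u t x1 x2) ^ 2).sum)
    else 0

/-- `‖φ(t)‖_s = Σ_{|α|≤s}‖Γ^αφ(t,·)‖_{L²(ℝ²)}`. -/
def sobNorm (s : ℕ) (us : List (ℝ → ℝ → ℝ → ℝ)) (t : ℝ) : ℝ :=
  ∑ α : Fin 7 → Fin (s + 1),
    if (∑ i, (α i : ℕ)) ≤ s then
      Real.sqrt (∫ x : ℝ × ℝ,
        (us.map fun u => (GamMulti (fun i => (α i : ℕ)) u t x.1 x.2) ^ 2).sum)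
    else 0

/-- The components of `∂u = (∂ₜu₁,∂₁u₁,∂₂u₁,∂ₜu₂,∂₁u₂,∂₂u₂)`. -/
def dList (u1 u2 : ℝ → ℝ → ℝ → ℝ) : List (ℝ → ℝ → ℝ → ℝ) :=
  [pt u1, p1 u1, p2 u1, pt u2, p1 u2, p2 u2]

/-- Smooth solution of the free wave equation with data `(φ0,φ1)`. -/
def IsFreeSolution (φ0 φ1 : ℝ → ℝ → ℝ) (φ : ℝ → ℝ → ℝ → ℝ) : Prop :=
  Smooth3 φ ∧ (∀ t x1 x2 : ℝ, 0 < t → dAlembert φ t x1 x2 = 0) ∧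
    (∀ x1 x2 : ℝ, φ 0 x1 x2 = φ0 x1 x2) ∧
    (∀ x1 x2 : ℝ, pt φ 0 x1 x2 = φ1 x1 x2)

/-- Mixed space-time partial `∂^α = ∂ₜ^{α₀}∂₁^{α₁}∂₂^{α₂}`. -/
def dmix (α : Fin 3 → ℕ) (u : ℝ → ℝ → ℝ → ℝ) : ℝ → ℝ → ℝ → ℝ :=
  pt^[α 0] (p1^[α 1] (p2^[α 2] u))

/-! Along the ray `x = (t + σ)ω` one has `d/dt = ∂ₜ + ∂_r`, hence
`∂ₜV = (∂ₜ + ∂_r) ½(∂_r − ∂ₜ)(r^{1/2}u) = ½(∂_r² − ∂ₜ²)(r^{1/2}u)`. With the polar form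
`Δ = ∂_r² + r⁻¹∂_r + r⁻²Ω²` of the Laplacian this equals
`−½ r^{1/2} □u − (8 r^{3/2})⁻¹(4Ω² + 1)u` for every smooth `u`. Inserting the equation for
`□u₁`, the term `½ t⁻¹U₂²U₁` of `K₁` cancels `−(2t)⁻¹V₁V₂²`; likewise for `u₂`. -/

def uncurry3 (u : ℝ → ℝ → ℝ → ℝ) : ℝ × ℝ × ℝ → ℝ := fun p => u p.1 p.2.1 p.2.2

theorem fderiv_fderiv_apply_comm {E F : Type*} [NormedAddCommGroup E] [NormedSpace ℝ E]
    [NormedAddCommGroup F] [NormedSpace ℝ F] {f : E → F} (hf : ContDiff ℝ 2 f) (x v w : E) :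
    fderiv ℝ (fun y => fderiv ℝ f y v) x w = fderiv ℝ (fun y => fderiv ℝ f y w) x v := by
  have hdf : DifferentiableAt ℝ (fderiv ℝ f) x :=
    ((hf.fderiv_right (m := 1) le_rfl).differentiable one_ne_zero).differentiableAt
  have happly (a b : E) :
      fderiv ℝ (fun y => fderiv ℝ f y a) x b = fderiv ℝ (fderiv ℝ f) x b a := by
    rw [fderiv_clm_apply hdf (differentiableAt_const a)]
    simp
  rw [happly, happly, hf.contDiffAt.isSymmSndFDerivAt (by simp) w v]

theorem radius_sq (x1 x2 : ℝ) : radius x1 x2 ^ 2 = x1 ^ 2 + x2 ^ 2 :=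
  Real.sq_sqrt (by positivity)

theorem radius_ray {ρ ω1 ω2 : ℝ} (hω : ω1 ^ 2 + ω2 ^ 2 = 1) (hρ : 0 ≤ ρ) :
    radius (ρ * ω1) (ρ * ω2) = ρ := by
  rw [radius, show (ρ * ω1) ^ 2 + (ρ * ω2) ^ 2 = ρ ^ 2 by linear_combination ρ ^ 2 * hω,
    Real.sqrt_sq hρ]

theorem hasDerivAt_radius_x1 {x1 x2 : ℝ} (hr : 0 < radius x1 x2) :
    HasDerivAt (fun y => radius y x2) (x1 / radius x1 x2) x1 := by
  have h : HasDerivAt (fun y => radius y x2) (2 * x1 / (2 * radius x1 x2)) x1 := by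
    simpa [radius] using ((hasDerivAt_pow 2 x1).add_const (x2 ^ 2)).sqrt (Real.sqrt_pos.mp hr).ne'
  exact h.congr_deriv (mul_div_mul_left _ _ two_ne_zero)

theorem hasDerivAt_radius_x2 {x1 x2 : ℝ} (hr : 0 < radius x1 x2) :
    HasDerivAt (fun y => radius x1 y) (x2 / radius x1 x2) x2 := by
  have h : HasDerivAt (fun y => radius x1 y) (2 * x2 / (2 * radius x1 x2)) x2 := by
    simpa [radius] using ((hasDerivAt_pow 2 x2).const_add (x1 ^ 2)).sqrt (Real.sqrt_pos.mp hr).ne'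
  exact h.congr_deriv (mul_div_mul_left _ _ two_ne_zero)

namespace Smooth3

variable {u : ℝ → ℝ → ℝ → ℝ}

theorem hasDerivAt_comp (hu : Smooth3 u) {γ : ℝ → ℝ × ℝ × ℝ} {γ' : ℝ × ℝ × ℝ} {s : ℝ}
    (hγ : HasDerivAt γ γ' s) :
    HasDerivAt (fun s => u (γ s).1 (γ s).2.1 (γ s).2.2) (fderiv ℝ (uncurry3 u) (γ s) γ') s :=
  ((hu.differentiable (by simp)).differentiableAt.hasFDerivAt).comp_hasDerivAt s hγ

theorem hasDerivAt_pt (hu : Smooth3 u) (t x1 x2 : ℝ) :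
    HasDerivAt (fun s => u s x1 x2) (pt u t x1 x2) t :=
  (hu.hasDerivAt_comp ((hasDerivAt_id t).prodMk
    ((hasDerivAt_const t x1).prodMk (hasDerivAt_const t x2)))).differentiableAt.hasDerivAt

theorem hasDerivAt_p1 (hu : Smooth3 u) (t x1 x2 : ℝ) :
    HasDerivAt (fun y => u t y x2) (p1 u t x1 x2) x1 :=
  (hu.hasDerivAt_comp ((hasDerivAt_const x1 t).prodMk
    ((hasDerivAt_id x1).prodMk (hasDerivAt_const x1 x2)))).differentiableAt.hasDerivAt

theorem hasDerivAt_p2 (hu : Smooth3 u) (t x1 x2 : ℝ) :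
    HasDerivAt (fun y => u t x1 y) (p2 u t x1 x2) x2 :=
  (hu.hasDerivAt_comp ((hasDerivAt_const x2 t).prodMk
    ((hasDerivAt_const x2 x1).prodMk (hasDerivAt_id x2)))).differentiableAt.hasDerivAt

theorem pt_eq_fderiv (hu : Smooth3 u) (t x1 x2 : ℝ) :
    pt u t x1 x2 = fderiv ℝ (uncurry3 u) (t, x1, x2) (1, 0, 0) :=
  (hu.hasDerivAt_pt t x1 x2).unique (hu.hasDerivAt_comp ((hasDerivAt_id t).prodMk
    ((hasDerivAt_const t x1).prodMk (hasDerivAt_const t x2))))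

theorem p1_eq_fderiv (hu : Smooth3 u) (t x1 x2 : ℝ) :
    p1 u t x1 x2 = fderiv ℝ (uncurry3 u) (t, x1, x2) (0, 1, 0) :=
  (hu.hasDerivAt_p1 t x1 x2).unique (hu.hasDerivAt_comp ((hasDerivAt_const x1 t).prodMk
    ((hasDerivAt_id x1).prodMk (hasDerivAt_const x1 x2))))

theorem p2_eq_fderiv (hu : Smooth3 u) (t x1 x2 : ℝ) :
    p2 u t x1 x2 = fderiv ℝ (uncurry3 u) (t, x1, x2) (0, 0, 1) :=
  (hu.hasDerivAt_p2 t x1 x2).unique (hu.hasDerivAt_comp ((hasDerivAt_const x2 t).prodMk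
    ((hasDerivAt_const x2 x1).prodMk (hasDerivAt_id x2))))

theorem uncurry3_pt (hu : Smooth3 u) :
    uncurry3 (pt u) = fun p => fderiv ℝ (uncurry3 u) p (1, 0, 0) :=
  funext fun p => hu.pt_eq_fderiv p.1 p.2.1 p.2.2

theorem uncurry3_p1 (hu : Smooth3 u) :
    uncurry3 (p1 u) = fun p => fderiv ℝ (uncurry3 u) p (0, 1, 0) :=
  funext fun p => hu.p1_eq_fderiv p.1 p.2.1 p.2.2

theorem uncurry3_p2 (hu : Smooth3 u) :
    uncurry3 (p2 u) = fun p => fderiv ℝ (uncurry3 u) p (0, 0, 1) :=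
  funext fun p => hu.p2_eq_fderiv p.1 p.2.1 p.2.2

theorem contDiff_fderiv_apply (hu : Smooth3 u) (v : ℝ × ℝ × ℝ) :
    ContDiff ℝ (⊤ : ℕ∞) fun p => fderiv ℝ (uncurry3 u) p v :=
  (ContDiff.fderiv_right hu (by simp)).clm_apply contDiff_const

protected theorem pt (hu : Smooth3 u) : Smooth3 (pt u) := by
  change ContDiff ℝ (⊤ : ℕ∞) (uncurry3 (pt u))
  rw [hu.uncurry3_pt]
  exact hu.contDiff_fderiv_apply _

protected theorem p1 (hu : Smooth3 u) : Smooth3 (p1 u) := by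
  change ContDiff ℝ (⊤ : ℕ∞) (uncurry3 (p1 u))
  rw [hu.uncurry3_p1]
  exact hu.contDiff_fderiv_apply _

protected theorem p2 (hu : Smooth3 u) : Smooth3 (p2 u) := by
  change ContDiff ℝ (⊤ : ℕ∞) (uncurry3 (p2 u))
  rw [hu.uncurry3_p2]
  exact hu.contDiff_fderiv_apply _

theorem pt_p1_comm (hu : Smooth3 u) (t x1 x2 : ℝ) :
    pt (p1 u) t x1 x2 = p1 (pt u) t x1 x2 := by
  rw [hu.p1.pt_eq_fderiv, hu.pt.p1_eq_fderiv, hu.uncurry3_p1, hu.uncurry3_pt]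
  exact fderiv_fderiv_apply_comm (hu.of_le (by norm_cast)) _ _ _

theorem pt_p2_comm (hu : Smooth3 u) (t x1 x2 : ℝ) :
    pt (p2 u) t x1 x2 = p2 (pt u) t x1 x2 := by
  rw [hu.p2.pt_eq_fderiv, hu.pt.p2_eq_fderiv, hu.uncurry3_p2, hu.uncurry3_pt]
  exact fderiv_fderiv_apply_comm (hu.of_le (by norm_cast)) _ _ _

theorem p1_p2_comm (hu : Smooth3 u) (t x1 x2 : ℝ) :
    p1 (p2 u) t x1 x2 = p2 (p1 u) t x1 x2 := by
  rw [hu.p2.p1_eq_fderiv, hu.p1.p2_eq_fderiv, hu.uncurry3_p2, hu.uncurry3_p1]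
  exact fderiv_fderiv_apply_comm (hu.of_le (by norm_cast)) _ _ _

theorem hasDerivAt_ray (hu : Smooth3 u) (σ ω1 ω2 t : ℝ) :
    HasDerivAt (fun s => u s ((s + σ) * ω1) ((s + σ) * ω2))
      (pt u t ((t + σ) * ω1) ((t + σ) * ω2) + ω1 * p1 u t ((t + σ) * ω1) ((t + σ) * ω2)
        + ω2 * p2 u t ((t + σ) * ω1) ((t + σ) * ω2)) t := by
  have hγ : HasDerivAt (fun s => (s, (s + σ) * ω1, (s + σ) * ω2)) ((1, ω1, ω2) : ℝ × ℝ × ℝ) t :=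
    (hasDerivAt_id t).prodMk (HasDerivAt.prodMk
      (by simpa using ((hasDerivAt_id t).add_const σ).mul_const ω1)
      (by simpa using ((hasDerivAt_id t).add_const σ).mul_const ω2))
  convert hu.hasDerivAt_comp hγ using 1
  have hdir : ((1, ω1, ω2) : ℝ × ℝ × ℝ) = (1, 0, 0) + ω1 • (0, 1, 0) + ω2 • (0, 0, 1) := by
    ext <;> simp
  rw [hu.pt_eq_fderiv, hu.p1_eq_fderiv, hu.p2_eq_fderiv, hdir, map_add, map_add, map_smul,
    map_smul, smul_eq_mul, smul_eq_mul]

theorem rot_rot_eq (hu : Smooth3 u) (t x1 x2 : ℝ) :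
    rot (rot u) t x1 x2 = x1 ^ 2 * p2 (p2 u) t x1 x2 + x2 ^ 2 * p1 (p1 u) t x1 x2
      - 2 * x1 * x2 * p1 (p2 u) t x1 x2 - x1 * p1 u t x1 x2 - x2 * p2 u t x1 x2 := by
  have h1 : p1 (rot u) t x1 x2 = _ :=
    (((hasDerivAt_id' x1).mul (hu.p2.hasDerivAt_p1 t x1 x2)).sub
      ((hu.p1.hasDerivAt_p1 t x1 x2).const_mul x2)).deriv
  have h2 : p2 (rot u) t x1 x2 = _ :=
    (((hu.p2.hasDerivAt_p2 t x1 x2).const_mul x1).sub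
      ((hasDerivAt_id' x2).mul (hu.p1.hasDerivAt_p2 t x1 x2))).deriv
  change x1 * p2 (rot u) t x1 x2 - x2 * p1 (rot u) t x1 x2 = _
  rw [h1, h2, hu.p1_p2_comm]
  ring

theorem Uop_eq (hu : Smooth3 u) {t x1 x2 : ℝ} (hr : 0 < radius x1 x2) :
    Uop u t x1 x2 = √(radius x1 x2) / 2 * (x1 / radius x1 x2 * p1 u t x1 x2
        + x2 / radius x1 x2 * p2 u t x1 x2 - pt u t x1 x2)
      + u t x1 x2 / (4 * √(radius x1 x2)) := by
  have h1 : p1 (fun s y1 y2 => √(radius y1 y2) * u s y1 y2) t x1 x2 = _ :=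
    (((hasDerivAt_radius_x1 hr).sqrt hr.ne').mul (hu.hasDerivAt_p1 t x1 x2)).deriv
  have h2 : p2 (fun s y1 y2 => √(radius y1 y2) * u s y1 y2) t x1 x2 = _ :=
    (((hasDerivAt_radius_x2 hr).sqrt hr.ne').mul (hu.hasDerivAt_p2 t x1 x2)).deriv
  have h3 : pt (fun s y1 y2 => √(radius y1 y2) * u s y1 y2) t x1 x2 = _ :=
    ((hu.hasDerivAt_pt t x1 x2).const_mul _).deriv
  simp only [Uop, ← Real.sqrt_eq_rpow]
  rw [h1, h2, h3]
  have hs : 0 < √(radius x1 x2) := Real.sqrt_pos.mpr hr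
  field_simp
  linear_combination -4 * u t x1 x2 * radius_sq x1 x2

theorem Vop_eq (hu : Smooth3 u) {σ ω1 ω2 s : ℝ} (hω : ω1 ^ 2 + ω2 ^ 2 = 1) (hs : 0 < s + σ) :
    Vop u s σ ω1 ω2 = √(s + σ) / 2 * (ω1 * p1 u s ((s + σ) * ω1) ((s + σ) * ω2)
        + ω2 * p2 u s ((s + σ) * ω1) ((s + σ) * ω2) - pt u s ((s + σ) * ω1) ((s + σ) * ω2))
      + u s ((s + σ) * ω1) ((s + σ) * ω2) / (4 * √(s + σ)) := by
  rw [Vop, hu.Uop_eq (by rwa [radius_ray hω hs.le]), radius_ray hω hs.le,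
    mul_div_cancel_left₀ _ hs.ne', mul_div_cancel_left₀ _ hs.ne']

theorem hasDerivAt_Vop (hu : Smooth3 u) {σ ω1 ω2 t : ℝ} (hω : ω1 ^ 2 + ω2 ^ 2 = 1)
    (hts : 0 < t + σ) :
    HasDerivAt (fun s => Vop u s σ ω1 ω2)
      (-(1 / 2) * (t + σ) ^ ((1 : ℝ) / 2) * dAlembert u t ((t + σ) * ω1) ((t + σ) * ω2)
        - 1 / (8 * (t + σ) ^ ((3 : ℝ) / 2)) * (4 * rot (rot u) t ((t + σ) * ω1) ((t + σ) * ω2)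
          + u t ((t + σ) * ω1) ((t + σ) * ω2))) t := by
  have hsqrt : HasDerivAt (fun s => √(s + σ)) (1 / (2 * √(t + σ))) t := by
    simpa using ((hasDerivAt_id t).add_const σ).sqrt hts.ne'
  have hsqrt_pos : 0 < √(t + σ) := Real.sqrt_pos.mpr hts
  have hW := ((hsqrt.div_const 2).mul ((((hu.p1.hasDerivAt_ray σ ω1 ω2 t).const_mul ω1).add
      ((hu.p2.hasDerivAt_ray σ ω1 ω2 t).const_mul ω2)).sub (hu.pt.hasDerivAt_ray σ ω1 ω2 t))).add
    ((hu.hasDerivAt_ray σ ω1 ω2 t).div (hsqrt.const_mul 4) (by positivity))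
  refine (hW.congr_of_eventuallyEq ?_).congr_deriv ?_
  · filter_upwards [Ioi_mem_nhds (show -σ < t by linarith)] with s hs
    exact hu.Vop_eq hω (neg_lt_iff_pos_add.mp hs)
  simp only [Pi.add_apply, Pi.sub_apply]
  rw [hu.rot_rot_eq, dAlembert, hu.pt_p1_comm, hu.pt_p2_comm, hu.p1_p2_comm,
    ← Real.sqrt_eq_rpow, show (3 : ℝ) / 2 = 1 + 1 / 2 by norm_num, Real.rpow_add hts,
    Real.rpow_one, ← Real.sqrt_eq_rpow]
  set b := √(t + σ)
  have hb : b ^ 2 = t + σ := Real.sq_sqrt hts.le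
  rw [← hb]
  field_simp
  -- `ω₁² + ω₂² = 1` is what turns `∂_r² + r⁻¹∂_r + r⁻²Ω²` into `∂₁² + ∂₂²`.
  linear_combination 64 * b ^ 4 * (p1 (p1 u) t (b ^ 2 * ω1) (b ^ 2 * ω2)
    + p2 (p2 u) t (b ^ 2 * ω1) (b ^ 2 * ω2)) * hω

theorem hasDerivAt_Vop_of_dAlembert_eq {ua ub : ℝ → ℝ → ℝ → ℝ} (hua : Smooth3 ua)
    {σ ω1 ω2 t : ℝ} (hω : ω1 ^ 2 + ω2 ^ 2 = 1) (hts : 0 < t + σ)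
    (hpde : dAlembert ua t ((t + σ) * ω1) ((t + σ) * ω2)
      = -(pt ub t ((t + σ) * ω1) ((t + σ) * ω2)) ^ 2 * pt ua t ((t + σ) * ω1) ((t + σ) * ω2)) :
    HasDerivAt (fun s => Vop ua s σ ω1 ω2)
      (-1 / (2 * t) * Vop ua t σ ω1 ω2 * (Vop ub t σ ω1 ω2) ^ 2 + Kfun ua ub t σ ω1 ω2) t := by
  refine (hua.hasDerivAt_Vop hω hts).congr_deriv ?_
  rw [hpde]
  simp only [Kfun, Hfun, Vop, radius_ray hω hts.le]
  ring

end Smooth3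

/-- the profile equations for `V = (V₁,V₂)`. -/
theorem profile_equations (u1 u2 : ℝ → ℝ → ℝ → ℝ)
    (hs1 : Smooth3 u1) (hs2 : Smooth3 u2)
    (hpde1 : ∀ t x1 x2 : ℝ, 0 < t →
      dAlembert u1 t x1 x2 = -(pt u2 t x1 x2) ^ 2 * pt u1 t x1 x2)
    (hpde2 : ∀ t x1 x2 : ℝ, 0 < t →
      dAlembert u2 t x1 x2 = -(pt u1 t x1 x2) ^ 2 * pt u2 t x1 x2) :
    ∀ σ ω1 ω2 : ℝ, ω1 ^ 2 + ω2 ^ 2 = 1 → ∀ t : ℝ, 0 < t → 0 < t + σ →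
      HasDerivAt (fun s => Vop u1 s σ ω1 ω2)
        (-1 / (2 * t) * Vop u1 t σ ω1 ω2 * (Vop u2 t σ ω1 ω2) ^ 2
          + Kfun u1 u2 t σ ω1 ω2) t ∧
      HasDerivAt (fun s => Vop u2 s σ ω1 ω2)
        (-1 / (2 * t) * (Vop u1 t σ ω1 ω2) ^ 2 * Vop u2 t σ ω1 ω2
          + Kfun u2 u1 t σ ω1 ω2) t := by
  intro σ ω1 ω2 hω t ht hts
  exact ⟨hs1.hasDerivAt_Vop_of_dAlembert_eq hω hts (hpde1 _ _ _ ht),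
    (hs2.hasDerivAt_Vop_of_dAlembert_eq hω hts (hpde2 _ _ _ ht)).congr_deriv (by ring)⟩

end
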